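/- Under assumptions (A2) and (A3), suppose α ≥ 2·N·L̄/(1−γ). Then for every initial condition x₀ ∈ 𝔾 and z₀ > 0, any closed-loop trajectory (x_k, z_k) possesses a subsequence of states converging to the origin: there exist indices k₁ < k₂ < … with x_{k_j} → 0 as j → ∞. -/

import Mathlib

open Filter Topology

noncomputable section

/-- The state space `ℝⁿ` with the Euclidean norm. -/
abbrev Euc (n : ℕ) := EuclideanSpace ℝ (Fin n)

/-- Predicted trajectory: `traj f x u ℓ` is the state `x^u_ℓ(x)` reached `ℓ` steps ahead
starting from `x` and applying the controls `u 0, u 1, …` (so `traj f x u 0 = x` and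
`x^u_1(x) = f x (u 0)`). -/
def traj {n m : ℕ} (f : Euc n → Euc m → Euc n) (x : Euc n) (u : ℕ → Euc m) : ℕ → Euc n
  | 0 => x
  | ℓ + 1 => f (traj f x u ℓ) (u ℓ)

/-- `Φ(x,u,q) = Σ_{ℓ=1}^q L(x^u_ℓ(x), u_ℓ)`. -/
def Phi {n m : ℕ} (f : Euc n → Euc m → Euc n) (L : Euc n → Euc m → ℝ)
    (x : Euc n) (u : ℕ → Euc m) (q : ℕ) : ℝ :=
  ∑ i ∈ Finset.range q, L (traj f x u (i + 1)) (u i)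

/-- `W̲(x,u,q) = min_{1 ≤ ℓ ≤ q} W(x^u_ℓ(x))`. -/
def Wlow {n m : ℕ} (f : Euc n → Euc m → Euc n) (W : Euc n → ℝ)
    (x : Euc n) (u : ℕ → Euc m) (q : ℕ) : ℝ :=
  sInf ((fun ℓ => W (traj f x u ℓ)) '' Set.Icc 1 q)

/-- The cost `J^{(x,z)}(u,q) = z·Φ(x,u,q) + α·W̲(x,u,q)`. -/
def Jcost {n m : ℕ} (f : Euc n → Euc m → Euc n) (L : Euc n → Euc m → ℝ) (W : Euc n → ℝ)
    (α : ℝ) (x : Euc n) (z : ℝ) (u : ℕ → Euc m) (q : ℕ) : ℝ :=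
  z * Phi f L x u q + α * Wlow f W x u q

/-- A pair `(u, q)` is feasible for `P(x,z)`: controls in `𝕌`, horizon `1 ≤ q ≤ N`, and the
predicted states over the horizon stay in `𝔾`. -/
def Feasible {n m : ℕ} (f : Euc n → Euc m → Euc n) (𝕌 : Set (Euc m)) (𝔾 : Set (Euc n))
    (N : ℕ) (x : Euc n) (u : ℕ → Euc m) (q : ℕ) : Prop :=
  (∀ i, u i ∈ 𝕌) ∧ 1 ≤ q ∧ q ≤ N ∧ ∀ ℓ ∈ Set.Icc 1 q, traj f x u ℓ ∈ 𝔾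

/-- `J*(x,z)`: the infimum of the cost over feasible pairs. -/
def Jstar {n m : ℕ} (f : Euc n → Euc m → Euc n) (𝕌 : Set (Euc m)) (𝔾 : Set (Euc n))
    (N : ℕ) (L : Euc n → Euc m → ℝ) (W : Euc n → ℝ) (α : ℝ) (x : Euc n) (z : ℝ) : ℝ :=
  sInf {c | ∃ u q, Feasible f 𝕌 𝔾 N x u q ∧ c = Jcost f L W α x z u q}

/-- Assumption (A2): `W` is continuous and positive definite, `γ ∈ (0,1)`, `N ≥ 1`, and from
every admissible state there is an admissible control sequence contracting `W` by `γ`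
within `N` steps. -/
def A2 {n m : ℕ} (f : Euc n → Euc m → Euc n) (𝕌 : Set (Euc m)) (𝔾 : Set (Euc n))
    (W : Euc n → ℝ) (γ : ℝ) (N : ℕ) : Prop :=
  Continuous W ∧ W 0 = 0 ∧ (∀ x, x ≠ 0 → 0 < W x) ∧ γ ∈ Set.Ioo (0 : ℝ) 1 ∧ 1 ≤ N ∧
    ∀ x ∈ 𝔾, ∃ u : ℕ → Euc m, (∀ i, u i ∈ 𝕌) ∧ (∀ ℓ ∈ Set.Icc 1 N, traj f x u ℓ ∈ 𝔾) ∧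
      Wlow f W x u N ≤ γ * W x

/-- Assumption (A3): the stage cost `L` satisfies `0 ≤ L ≤ L̄` on `𝔾 × 𝕌`, and
`Q(x) := L(x,0)` is positive definite with `Q(x) ≤ L(x,u)` for all `u`. -/
def A3 {n m : ℕ} (𝕌 : Set (Euc m)) (𝔾 : Set (Euc n)) (L : Euc n → Euc m → ℝ)
    (Lbar : ℝ) : Prop :=
  (∀ x ∈ 𝔾, ∀ u ∈ 𝕌, 0 ≤ L x u ∧ L x u ≤ Lbar) ∧
    L 0 0 = 0 ∧ (∀ x, x ≠ 0 → 0 < L x 0) ∧ (∀ x u, L x 0 ≤ L x u)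

/-- A closed-loop trajectory `(x_k, z_k)` of the MPC law: at each instant an optimal feasible
pair `(u*, q*)` with minimal horizon among optimal pairs is applied (first control only), and
the internal state `z` is updated by `z⁺ = z` if `W(x) > z` and `z⁺ = β z` otherwise. -/
def ClosedLoop {n m : ℕ} (f : Euc n → Euc m → Euc n) (𝕌 : Set (Euc m)) (𝔾 : Set (Euc n))
    (N : ℕ) (L : Euc n → Euc m → ℝ) (W : Euc n → ℝ) (α β : ℝ)
    (x : ℕ → Euc n) (z : ℕ → ℝ) : Prop :=
  (∀ k, ∃ (ustar : ℕ → Euc m) (qstar : ℕ),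
      Feasible f 𝕌 𝔾 N (x k) ustar qstar ∧
      Jcost f L W α (x k) (z k) ustar qstar = Jstar f 𝕌 𝔾 N L W α (x k) (z k) ∧
      (∀ u q, Feasible f 𝕌 𝔾 N (x k) u q →
        Jcost f L W α (x k) (z k) u q = Jstar f 𝕌 𝔾 N L W α (x k) (z k) → qstar ≤ q) ∧
      x (k + 1) = f (x k) (ustar 0)) ∧
  ∀ k, z (k + 1) = if z k < W (x k) then z k else β * z k



section Aux

variable {n m : ℕ} {f : Euc n → Euc m → Euc n} {W : Euc n → ℝ} {L : Euc n → Euc m → ℝ}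
  {x : Euc n} {u : ℕ → Euc m}

lemma traj_shift (f : Euc n → Euc m → Euc n) (x : Euc n) (u : ℕ → Euc m) :
    ∀ ℓ, traj f (f x (u 0)) (fun i => u (i + 1)) ℓ = traj f x u (ℓ + 1)
  | 0 => rfl
  | ℓ + 1 => by
      show f (traj f (f x (u 0)) (fun i => u (i + 1)) ℓ) (u (ℓ + 1))
          = f (traj f x u (ℓ + 1)) (u (ℓ + 1))
      rw [traj_shift f x u ℓ]

lemma wlow_le {q ℓ : ℕ} (h : ℓ ∈ Set.Icc 1 q) :
    Wlow f W x u q ≤ W (traj f x u ℓ) :=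
  csInf_le ((Set.finite_Icc 1 q).image _).bddBelow ⟨ℓ, h, rfl⟩

lemma wlow_exists {q : ℕ} (hq : 1 ≤ q) :
    ∃ ℓ ∈ Set.Icc 1 q, Wlow f W x u q = W (traj f x u ℓ) := by
  have hne : ((fun ℓ => W (traj f x u ℓ)) '' Set.Icc 1 q).Nonempty :=
    ⟨_, ⟨1, ⟨le_refl 1, hq⟩, rfl⟩⟩
  obtain ⟨ℓ, hℓ, hval⟩ := hne.csInf_mem ((Set.finite_Icc 1 q).image _)
  exact ⟨ℓ, hℓ, hval.symm⟩

lemma wlow_one : Wlow f W x u 1 = W (traj f x u 1) := by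
  unfold Wlow
  rw [Set.Icc_self, Set.image_singleton, csInf_singleton]

lemma phi_one (f : Euc n → Euc m → Euc n) (L : Euc n → Euc m → ℝ)
    (x : Euc n) (u : ℕ → Euc m) : Phi f L x u 1 = L (traj f x u 1) (u 0) := by
  simp [Phi]

lemma phi_shift (f : Euc n → Euc m → Euc n) (L : Euc n → Euc m → ℝ)
    (x : Euc n) (u : ℕ → Euc m) (q : ℕ) :
    Phi f L (f x (u 0)) (fun i => u (i + 1)) q
      = Phi f L x u (q + 1) - L (traj f x u 1) (u 0) := by
  unfold Phi
  rw [Finset.sum_range_succ' (fun i => L (traj f x u (i + 1)) (u i)) q]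
  have h : ∀ i, L (traj f (f x (u 0)) (fun j => u (j + 1)) (i + 1)) (u (i + 1))
      = L (traj f x u (i + 1 + 1)) (u (i + 1)) := fun i => by rw [traj_shift]
  simp only [h]
  ring_nf

lemma tendsto_zero_of_posdef {g : Euc n → ℝ} (hg : Continuous g)
    (hpos : ∀ y : Euc n, y ≠ 0 → 0 < g y) {K : Set (Euc n)} (hK : IsCompact K)
    {y : ℕ → Euc n} (hy : ∀ k, y k ∈ K)
    (hgy : Tendsto (fun k => g (y k)) atTop (𝓝 0)) :
    Tendsto y atTop (𝓝 0) := by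
  by_contra h
  rw [NormedAddCommGroup.tendsto_nhds_zero] at h
  push_neg at h
  obtain ⟨ε, hε, hfreq⟩ := h
  have hScl : IsClosed {v : Euc n | ε ≤ ‖v‖} := isClosed_le continuous_const continuous_norm
  have hScomp : IsCompact (K ∩ {v : Euc n | ε ≤ ‖v‖}) := hK.inter_right hScl
  have hSne : (K ∩ {v : Euc n | ε ≤ ‖v‖}).Nonempty := by
    obtain ⟨k, hk⟩ := hfreq.exists
    exact ⟨y k, hy k, hk⟩
  obtain ⟨v0, hv0, hmin⟩ := hScomp.exists_isMinOn hSne hg.continuousOn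
  have hv0ne : v0 ≠ 0 := by
    intro h0
    have h2 : ε ≤ ‖(0 : Euc n)‖ := h0 ▸ hv0.2
    simp only [norm_zero] at h2
    linarith
  have hδ : 0 < g v0 := hpos v0 hv0ne
  have hev : ∀ᶠ k in atTop, g (y k) < g v0 := hgy.eventually_lt_const hδ
  obtain ⟨k, hk1, hk2⟩ := (hfreq.and_eventually hev).exists
  exact absurd hk2 (not_lt.mpr (hmin ⟨hy k, hk1⟩))

end Aux

/-- Corollary 2: under (A2) and (A3) with `α ≥ 2·N·L̄/(1−γ)`, for every
initial condition `x₀ ∈ 𝔾`, `z₀ > 0`, any closed-loop trajectory possesses a subsequence of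
states converging to the origin. -/
theorem origin_is_accumulation_point {n m : ℕ}
    (f : Euc n → Euc m → Euc n) (𝕌 : Set (Euc m)) (𝔾 : Set (Euc n))
    (W : Euc n → ℝ) (L : Euc n → Euc m → ℝ) (γ Lbar α β : ℝ) (N : ℕ)
    (hf0 : f 0 0 = 0) (hUcomp : IsCompact 𝕌) (hU0 : (0 : Euc m) ∈ 𝕌)
    (hG0 : (0 : Euc n) ∈ 𝔾) (hGbdd : Bornology.IsBounded 𝔾)
    (hA2 : A2 f 𝕌 𝔾 W γ N) (hA3 : A3 𝕌 𝔾 L Lbar)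
    (hQcont : Continuous (fun y => L y 0))
    (hα : 0 < α) (hαbig : 2 * N * Lbar / (1 - γ) ≤ α) (hβ : β ∈ Set.Ioo (0 : ℝ) 1)
    (x : ℕ → Euc n) (z : ℕ → ℝ) (hx0 : x 0 ∈ 𝔾) (hz0 : 0 < z 0)
    (hcl : ClosedLoop f 𝕌 𝔾 N L W α β x z) :
    ∃ φ : ℕ → ℕ, StrictMono φ ∧
      Tendsto (fun j => x (φ j)) atTop (𝓝 (0 : Euc n)) := by
  classical
  obtain ⟨hWcont, hW0, hWpos, hγ, hN, hA2c⟩ := hA2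
  obtain ⟨hLbnd, hL00, hQpos, hQle⟩ := hA3
  have hWnn : ∀ y, 0 ≤ W y := by
    intro y
    rcases eq_or_ne y 0 with h | h
    · simp [h, hW0]
    · exact (hWpos y h).le
  have hQnn : ∀ y, 0 ≤ L y 0 := by
    intro y
    rcases eq_or_ne y 0 with h | h
    · simp [h, hL00]
    · exact (hQpos y h).le
  have hLbar0 : 0 ≤ Lbar := (hLbnd 0 hG0 0 hU0).1.trans (hLbnd 0 hG0 0 hU0).2
  have hxG : ∀ k, x k ∈ 𝔾 := by
    intro k
    cases k with
    | zero => exact hx0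
    | succ k =>
      obtain ⟨us, qs, hfeas, -, -, hstep⟩ := hcl.1 k
      have h1 : traj f (x k) us 1 ∈ 𝔾 := hfeas.2.2.2 1 ⟨le_refl 1, hfeas.2.1⟩
      have h2 : traj f (x k) us 1 = x (k + 1) := by rw [hstep]; rfl
      rwa [h2] at h1
  have hzpos : ∀ k, 0 < z k := by
    intro k
    induction k with
    | zero => exact hz0
    | succ k ih =>
      rw [hcl.2 k]
      split
      · exact ih
      · exact mul_pos hβ.1 ih
  have hzmono : ∀ k, z (k + 1) ≤ z k := by
    intro k
    rw [hcl.2 k]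
    split
    · exact le_refl _
    · nlinarith [hzpos k, hβ.2, hβ.1]
  have hzanti : Antitone z := antitone_nat_of_succ_le hzmono
  have hKcomp : IsCompact (closure 𝔾) := hGbdd.isCompact_closure
  have hxK : ∀ k, x k ∈ closure 𝔾 := fun k => subset_closure (hxG k)
  by_cases hinf : {k | W (x k) ≤ z k}.Infinite
  · -- infinitely many times W (x k) ≤ z k : z decays geometrically along them
    set p : ℕ → Prop := fun k => W (x k) ≤ z k with hp
    have hinf' : (setOf p).Infinite := hinf
    have hmono := Nat.nth_strictMono hinf'
    refine ⟨Nat.nth p, hmono, ?_⟩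
    apply tendsto_zero_of_posdef hWcont hWpos hKcomp (fun j => hxK _)
    have hstep : ∀ j, z (Nat.nth p (j + 1)) ≤ β * z (Nat.nth p j) := by
      intro j
      have h1 : Nat.nth p j + 1 ≤ Nat.nth p (j + 1) := hmono (Nat.lt_succ_self j)
      calc z (Nat.nth p (j + 1)) ≤ z (Nat.nth p j + 1) := hzanti h1
        _ = β * z (Nat.nth p j) := by
            rw [hcl.2, if_neg (not_lt.mpr (Nat.nth_mem_of_infinite hinf' j))]
    have hgeo : ∀ j, z (Nat.nth p j) ≤ β ^ j * z 0 := by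
      intro j
      induction j with
      | zero => simpa using hzanti (Nat.zero_le _)
      | succ j ih =>
        calc z (Nat.nth p (j + 1)) ≤ β * z (Nat.nth p j) := hstep j
          _ ≤ β * (β ^ j * z 0) := mul_le_mul_of_nonneg_left ih hβ.1.le
          _ = β ^ (j + 1) * z 0 := by ring
    have hz0' : Tendsto (fun j => β ^ j * z 0) atTop (𝓝 0) := by
      simpa using (tendsto_pow_atTop_nhds_zero_of_lt_one hβ.1.le hβ.2).mul_const (z 0)
    exact squeeze_zero (fun j => hWnn _)
      (fun j => le_trans (Nat.nth_mem_of_infinite hinf' j) (hgeo j)) hz0'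
  · -- only finitely many: eventually z k < W (x k), z is constant, MPC descent argument
    have hfin : {k | W (x k) ≤ z k}.Finite := Set.not_infinite.mp hinf
    obtain ⟨K, hK⟩ : ∃ K, ∀ k, K ≤ k → z k < W (x k) := by
      obtain ⟨B, hB⟩ := hfin.bddAbove
      refine ⟨B + 1, fun k hk => ?_⟩
      by_contra h
      push_neg at h
      have hkB : k ≤ B := hB h
      omega
    have hzc : ∀ k, K ≤ k → z k = z K := by
      intro k hk
      induction k, hk using Nat.le_induction with
      | base => rfl
      | succ k hk ih => rw [hcl.2, if_pos (hK k hk), ih]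
    have hzbpos : 0 < z K := hzpos K
    -- basic nonnegativity facts about costs
    have hPhinn : ∀ (y : Euc n) (u : ℕ → Euc m) (q : ℕ), (∀ i, u i ∈ 𝕌) →
        (∀ ℓ ∈ Set.Icc 1 q, traj f y u ℓ ∈ 𝔾) → 0 ≤ Phi f L y u q := by
      intro y u q hu hG
      apply Finset.sum_nonneg
      intro i hi
      simp only [Finset.mem_range] at hi
      exact (hLbnd _ (hG (i + 1) ⟨by omega, by omega⟩) _ (hu i)).1
    have hWlnn : ∀ (y : Euc n) (u : ℕ → Euc m) (q : ℕ), 1 ≤ q → 0 ≤ Wlow f W y u q := by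
      intro y u q hq
      obtain ⟨ℓ, -, hval⟩ := wlow_exists (f := f) (W := W) (x := y) (u := u) hq
      rw [hval]; exact hWnn _
    have hJnn : ∀ (y : Euc n) (zz : ℝ) (u : ℕ → Euc m) (q : ℕ), 0 ≤ zz →
        Feasible f 𝕌 𝔾 N y u q → 0 ≤ Jcost f L W α y zz u q := by
      intro y zz u q hz hfe
      have h1 := hPhinn y u q hfe.1 hfe.2.2.2
      have h2 := hWlnn y u q hfe.2.1
      exact add_nonneg (mul_nonneg hz h1) (mul_nonneg hα.le h2)
    have hJstar_le : ∀ (y : Euc n) (zz : ℝ), 0 ≤ zz → ∀ (u : ℕ → Euc m) (q : ℕ),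
        Feasible f 𝕌 𝔾 N y u q →
        Jstar f 𝕌 𝔾 N L W α y zz ≤ Jcost f L W α y zz u q := by
      intro y zz hz u q hfe
      refine csInf_le ⟨0, fun c hc => ?_⟩ ⟨u, q, hfe, rfl⟩
      obtain ⟨u', q', hfe', rfl⟩ := hc
      exact hJnn y zz u' q' hz hfe'
    have hγ1 : 0 < 1 - γ := by linarith [hγ.2]
    have hαγ : 2 * (N : ℝ) * Lbar ≤ α * (1 - γ) := by
      rw [div_le_iff₀ hγ1] at hαbig; exact hαbig
    -- key descent inequality
    have key : ∀ k, K ≤ k →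
        Jstar f 𝕌 𝔾 N L W α (x (k + 1)) (z K) + z K * L (x (k + 1)) 0
          ≤ Jstar f 𝕌 𝔾 N L W α (x k) (z K) := by
      intro k hk
      obtain ⟨us, qs, hfeas, hopt, hmin, hstep⟩ := hcl.1 k
      have hzk : z k = z K := hzc k hk
      rw [hzk] at hopt hmin
      have htr1 : traj f (x k) us 1 = x (k + 1) := by rw [hstep]; rfl
      have hQx : L (x (k + 1)) 0 ≤ L (x (k + 1)) (us 0) := hQle _ _
      rcases eq_or_lt_of_le hfeas.2.1 with hq1 | hq2
      · -- horizon 1 : use the contraction assumption at x (k+1)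
        have hJk : Jstar f 𝕌 𝔾 N L W α (x k) (z K)
            = z K * L (x (k + 1)) (us 0) + α * W (x (k + 1)) := by
          rw [← hopt, ← hq1]
          unfold Jcost
          rw [wlow_one, phi_one, htr1]
        obtain ⟨v, hvU, hvG, hvW⟩ := hA2c (x (k + 1)) (hxG (k + 1))
        have hfeasv : Feasible f 𝕌 𝔾 N (x (k + 1)) v N := ⟨hvU, hN, le_refl N, hvG⟩
        have hPhiv : Phi f L (x (k + 1)) v N ≤ (N : ℝ) * Lbar := by
          unfold Phi
          calc ∑ i ∈ Finset.range N, L (traj f (x (k + 1)) v (i + 1)) (v i)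
              ≤ ∑ _i ∈ Finset.range N, Lbar := by
                refine Finset.sum_le_sum fun i hi => ?_
                simp only [Finset.mem_range] at hi
                exact (hLbnd _ (hvG (i + 1) ⟨by omega, by omega⟩) _ (hvU i)).2
            _ = (N : ℝ) * Lbar := by simp [mul_comm]
        have hJ1 : Jstar f 𝕌 𝔾 N L W α (x (k + 1)) (z K)
            ≤ z K * Phi f L (x (k + 1)) v N + α * Wlow f W (x (k + 1)) v N :=
          hJstar_le _ _ hzbpos.le v N hfeasv
        have hWx1 : z K < W (x (k + 1)) := by
          have := hK (k + 1) (by omega)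
          rwa [hzc (k + 1) (by omega)] at this
        have hαWl : α * Wlow f W (x (k + 1)) v N ≤ α * (γ * W (x (k + 1))) :=
          mul_le_mul_of_nonneg_left hvW hα.le
        rw [hJk]
        have e1 : α * (γ * W (x (k + 1)))
            = α * W (x (k + 1)) - α * (1 - γ) * W (x (k + 1)) := by ring
        have h1 : z K * ((N : ℝ) * Lbar) ≤ α * (1 - γ) * z K := by
          nlinarith [mul_le_mul_of_nonneg_right hαγ hzbpos.le,
            mul_nonneg (mul_nonneg (Nat.cast_nonneg N : (0 : ℝ) ≤ N) hLbar0) hzbpos.le]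
        have h2 : α * (1 - γ) * z K ≤ α * (1 - γ) * W (x (k + 1)) :=
          mul_le_mul_of_nonneg_left hWx1.le (mul_pos hα hγ1).le
        have h3 : z K * L (x (k + 1)) 0 ≤ z K * L (x (k + 1)) (us 0) :=
          mul_le_mul_of_nonneg_left hQx hzbpos.le
        have h4 : z K * Phi f L (x (k + 1)) v N ≤ z K * ((N : ℝ) * Lbar) :=
          mul_le_mul_of_nonneg_left hPhiv hzbpos.le
        linarith
      · -- horizon at least 2 : shift the optimal control sequence
        obtain ⟨ℓ₀, hℓ₀mem, hℓ₀⟩ :=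
          wlow_exists (f := f) (W := W) (x := x k) (u := us) hfeas.2.1
        obtain ⟨hℓ₀1, hℓ₀q⟩ := hℓ₀mem
        have hℓ₀2 : 2 ≤ ℓ₀ := by
          by_contra hcon
          have hℓ1 : ℓ₀ = 1 := by omega
          have hfe1 : Feasible f 𝕌 𝔾 N (x k) us 1 := by
            refine ⟨hfeas.1, le_refl 1, hN, fun ℓ hℓ => ?_⟩
            obtain ⟨ha, hb⟩ := hℓ
            have : ℓ = 1 := by omega
            rw [this]
            exact hfeas.2.2.2 1 ⟨le_refl 1, hfeas.2.1⟩
          have hΦmono : Phi f L (x k) us 1 ≤ Phi f L (x k) us qs := by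
            unfold Phi
            refine Finset.sum_le_sum_of_subset_of_nonneg
              (Finset.range_subset_range.mpr hfeas.2.1) fun i hi _ => ?_
            simp only [Finset.mem_range] at hi
            exact (hLbnd _ (hfeas.2.2.2 (i + 1) ⟨by omega, by omega⟩) _ (hfeas.1 i)).1
          have hw1 : Wlow f W (x k) us 1 = Wlow f W (x k) us qs := by
            rw [wlow_one, hℓ₀, hℓ1]
          have hJ1le : Jcost f L W α (x k) (z K) us 1
              ≤ Jstar f 𝕌 𝔾 N L W α (x k) (z K) := by
            rw [← hopt]
            unfold Jcost
            rw [hw1]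
            have := mul_le_mul_of_nonneg_left hΦmono hzbpos.le
            linarith
          have heq : Jcost f L W α (x k) (z K) us 1
              = Jstar f 𝕌 𝔾 N L W α (x k) (z K) :=
            le_antisymm hJ1le (hJstar_le _ _ hzbpos.le us 1 hfe1)
          have := hmin us 1 hfe1 heq
          omega
        set u' : ℕ → Euc m := fun i => us (i + 1) with hu'
        have hx1 : x (k + 1) = f (x k) (us 0) := hstep
        have htr' : ∀ ℓ, traj f (x (k + 1)) u' ℓ = traj f (x k) us (ℓ + 1) := by
          intro ℓ; rw [hx1]; exact traj_shift f (x k) us ℓ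
        have hqsN := hfeas.2.2.1
        have hfe' : Feasible f 𝕌 𝔾 N (x (k + 1)) u' (qs - 1) := by
          refine ⟨fun i => hfeas.1 _, by omega, by omega, fun ℓ hℓ => ?_⟩
          obtain ⟨ha, hb⟩ := hℓ
          rw [htr']
          exact hfeas.2.2.2 (ℓ + 1) ⟨by omega, by omega⟩
        have hΦ' : Phi f L (x (k + 1)) u' (qs - 1)
            = Phi f L (x k) us qs - L (x (k + 1)) (us 0) := by
          rw [hx1]
          have h := phi_shift f L (x k) us (qs - 1)
          rw [Nat.sub_add_cancel hfeas.2.1] at h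
          rw [h]
          rfl
        have hWl' : Wlow f W (x (k + 1)) u' (qs - 1) ≤ Wlow f W (x k) us qs := by
          rw [hℓ₀]
          have hmem' : ℓ₀ - 1 ∈ Set.Icc 1 (qs - 1) := ⟨by omega, by omega⟩
          have h := wlow_le (f := f) (W := W) (x := x (k + 1)) (u := u') hmem'
          rw [htr', Nat.sub_add_cancel (by omega : 1 ≤ ℓ₀)] at h
          exact h
        have hfinal := hJstar_le _ _ hzbpos.le u' (qs - 1) hfe'
        have hJc : Jcost f L W α (x (k + 1)) (z K) u' (qs - 1)
            = z K * Phi f L (x (k + 1)) u' (qs - 1)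
              + α * Wlow f W (x (k + 1)) u' (qs - 1) := rfl
        have hJk : Jstar f 𝕌 𝔾 N L W α (x k) (z K)
            = z K * Phi f L (x k) us qs + α * Wlow f W (x k) us qs := hopt.symm
        have h5 : α * Wlow f W (x (k + 1)) u' (qs - 1) ≤ α * Wlow f W (x k) us qs :=
          mul_le_mul_of_nonneg_left hWl' hα.le
        have h3 : z K * L (x (k + 1)) 0 ≤ z K * L (x (k + 1)) (us 0) :=
          mul_le_mul_of_nonneg_left hQx hzbpos.le
        have hdist : z K * (Phi f L (x k) us qs - L (x (k + 1)) (us 0))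
            = z K * Phi f L (x k) us qs - z K * L (x (k + 1)) (us 0) := by ring
        rw [hJc, hΦ'] at hfinal
        linarith
    -- the optimal values decrease, hence L (x k) 0 → 0
    set Js : ℕ → ℝ := fun j => Jstar f 𝕌 𝔾 N L W α (x (K + j)) (z K) with hJsdef
    have hJsnn : ∀ j, 0 ≤ Js j := by
      intro j
      obtain ⟨us, qs, hfeas, hopt, -, -⟩ := hcl.1 (K + j)
      have hz : z (K + j) = z K := hzc _ (Nat.le_add_right K j)
      rw [hJsdef]
      dsimp only
      rw [← hz, ← hopt]
      exact hJnn _ _ _ _ (by rw [hz]; exact hzbpos.le) hfeas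
    have hdec : ∀ j, Js (j + 1) + z K * L (x (K + j + 1)) 0 ≤ Js j := by
      intro j
      have h := key (K + j) (Nat.le_add_right K j)
      have harr : K + (j + 1) = K + j + 1 := by omega
      rw [hJsdef]
      dsimp only
      rw [harr]
      exact h
    have hanti : Antitone Js := by
      refine antitone_nat_of_succ_le fun j => ?_
      have h1 := hdec j
      have h2 : 0 ≤ z K * L (x (K + j + 1)) 0 := mul_nonneg hzbpos.le (hQnn _)
      linarith
    have hbddJ : BddBelow (Set.range Js) := by
      refine ⟨0, fun c hc => ?_⟩
      obtain ⟨j, rfl⟩ := hc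
      exact hJsnn j
    have hconv : Tendsto Js atTop (𝓝 (⨅ j, Js j)) := tendsto_atTop_ciInf hanti hbddJ
    have hconv' : Tendsto (fun j => Js (j + 1)) atTop (𝓝 (⨅ j, Js j)) :=
      hconv.comp (tendsto_add_atTop_nat 1)
    have hdiff : Tendsto (fun j => Js j - Js (j + 1)) atTop (𝓝 0) := by
      simpa using hconv.sub hconv'
    have hQto : Tendsto (fun j => L (x (K + j + 1)) 0) atTop (𝓝 0) := by
      refine squeeze_zero (g := fun j => (Js j - Js (j + 1)) / z K) (fun j => hQnn _) (fun j => ?_) ?_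
      · exact (le_div_iff₀ hzbpos).mpr (by have := hdec j; linarith)
      · simpa using hdiff.div_const (z K)
    refine ⟨fun j => j + (K + 1), strictMono_id.add_const (K + 1), ?_⟩
    apply tendsto_zero_of_posdef hQcont hQpos hKcomp (fun j => hxK _)
    have harr : ∀ j, K + j + 1 = j + (K + 1) := fun j => by omega
    simpa only [harr] using hQto
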